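/- arXiv:1502.04604 — 4 statements merged into one kernel-verified Lean document; each statement's English description precedes it below -/
import Mathlib

section
/- (SMDCT VII discrete orthogonality) Let N, n ≥ 1 and let k, k' ∈ D_N^+, i.e., integer vectors with N−1 ≥ k_1 ≥ … ≥ k_n ≥ 0 and N−1 ≥ k'_1 ≥ … ≥ k'_n ≥ 0. Then Σ_{r ∈ D_N^+} (∏_{i=1}^n c_{r_i}) · H_r^{−1} · cos⁺_{k+ρ}(2r_1/(2N−1), …, 2r_n/(2N−1)) · cos⁺_{k'+ρ}(2r_1/(2N−1), …, 2r_n/(2N−1)) = (H_k / d̃_k) · ((2N−1)/4)^n · δ_{k,k'}, where ρ = (1/2,…,1/2). -/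
open Real Finset

/-- The symmetric multivariate cosine function
`cos⁺_λ(x) = Σ_{σ ∈ S_n} ∏_{i=1}^n cos(π λ_{σ(i)} x_i)`. -/
noncomputable def cosPlus (n : ℕ) (lam x : Fin n → ℝ) : ℝ :=
  ∑ σ : Equiv.Perm (Fin n), ∏ i : Fin n, Real.cos (Real.pi * lam (σ i) * x i)

/-- The coefficient `c_r`: `1/2` if `r = 0` or `r = N`, and `1` otherwise. -/
noncomputable def cc (N r : ℕ) : ℝ := if r = 0 ∨ r = N then 1 / 2 else 1

/-- `H_k`, the order of the stabilizer of `k` under the permutation action of `S_n`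
(where `σ(k)_i = k_{σ(i)}`, i.e. `σ(k) = k ∘ σ`). -/
def Hstab {n : ℕ} {α : Type*} [DecidableEq α] (k : Fin n → α) : ℕ :=
  (Finset.univ.filter fun σ : Equiv.Perm (Fin n) => k ∘ σ = k).card

/-! Both `cos⁺` factors and the weights are invariant under permuting the coordinates of `r`,
and the `S_n`-orbit of any `r ∈ {0,…,N-1}^n` contains exactly one antitone point `s`, reached by
exactly `H_s` permutations; hence the weighted sum over `D_N^+` is `1/n!` times the sum over the
whole cube. Expanding both `cos⁺` into sums over permutations reduces the cube sum to products of
one-dimensional sums `Σ_{x<N} c_x cos(π(a+½)·2x/M) cos(π(b+½)·2x/M)` with `M = 2N-1`. By the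
product-to-sum formula these are combinations of `½ + Σ_{0<x<N} cos(2πmx/M)`, which the
Dirichlet kernel evaluates: `(N-½)·2πm/M = πm`, so the sum vanishes unless `M ∣ m`. This gives
`δ_{ab} M/(4 c_{a+1})`. Finally, for antitone `k, k'` a pair `(σ, τ)` with `k ∘ σ = k' ∘ τ`
exists only if `k = k'`, and then there are `n! H_k` of them. -/

open Equiv

theorem two_mul_sin_half_mul_sum_range_cos (θ : ℝ) (N : ℕ) :
    2 * sin (θ / 2) * ∑ x ∈ range N, cos (x * θ) = sin ((N - 1 / 2) * θ) + sin (θ / 2) := by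
  induction N with
  | zero =>
    rw [range_zero, sum_empty, Nat.cast_zero, show ((0 : ℝ) - 1 / 2) * θ = -(θ / 2) by ring,
      sin_neg]
    ring
  | succ N ih =>
    rw [sum_range_succ, mul_add, ih, two_mul_sin_mul_cos,
      show θ / 2 - N * θ = -((N - 1 / 2) * θ) by ring, sin_neg]
    push_cast
    ring_nf

section OneDimensional

variable {N : ℕ}

theorem sum_fin_cc_mul (hN : 1 ≤ N) (f : ℕ → ℝ) :
    ∑ x : Fin N, cc N x * f x = ∑ x ∈ range N, f x - f 0 / 2 := by
  obtain ⟨L, rfl⟩ := Nat.exists_eq_add_of_le' hN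
  rw [Fin.sum_univ_eq_sum_range (fun x => cc (L + 1) x * f x), sum_range_succ', sum_range_succ']
  have hcc : ∀ x ∈ range L, cc (L + 1) (x + 1) = 1 := fun x hx => by
    simp only [cc, mem_range] at hx ⊢; rw [if_neg (by omega)]
  rw [sum_congr rfl fun x hx => by rw [hcc x hx, one_mul]]
  simp only [cc, true_or, if_true]
  ring

theorem two_mul_sub_one_ne_zero (hN : 1 ≤ N) : (2 * N - 1 : ℝ) ≠ 0 := by
  have : (1 : ℝ) ≤ N := by exact_mod_cast hN
  linarith

theorem sum_range_cos_eq_half_of_not_dvd (hN : 1 ≤ N) {m : ℤ} (hm : ¬(2 * N - 1 : ℤ) ∣ m) :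
    ∑ x ∈ range N, cos (x * (2 * π * m / (2 * N - 1))) = 1 / 2 := by
  have hM := two_mul_sub_one_ne_zero hN
  have hsin : sin (2 * π * m / (2 * N - 1) / 2) ≠ 0 := by
    rw [Ne, sin_eq_zero_iff]
    rintro ⟨t, ht⟩
    refine hm ⟨t, ?_⟩
    have : (m : ℝ) = (2 * N - 1) * t := by
      field_simp at ht
      linarith
    exact_mod_cast this
  have hsum := two_mul_sin_half_mul_sum_range_cos (2 * π * m / (2 * N - 1)) N
  rw [show ((N : ℝ) - 1 / 2) * (2 * π * m / (2 * N - 1)) =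
      m * π * ((2 * N - 1) / (2 * N - 1)) by ring, div_self hM, mul_one, sin_int_mul_pi,
    zero_add] at hsum
  apply mul_left_cancel₀ (mul_ne_zero two_ne_zero hsin)
  rw [hsum]
  ring

theorem sum_fin_cc_mul_cos (hN : 1 ≤ N) (m : ℤ) :
    ∑ x : Fin N, cc N x * cos (2 * π * m * (x : ℕ) / (2 * N - 1)) =
      if (2 * N - 1 : ℤ) ∣ m then (2 * (N : ℝ) - 1) / 2 else 0 := by
  have harg : ∀ x : ℕ, 2 * π * m * x / (2 * N - 1) = x * (2 * π * m / (2 * N - 1)) :=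
    fun x => by ring
  rw [sum_fin_cc_mul hN fun x : ℕ => cos (2 * π * m * x / (2 * N - 1))]
  simp only [harg]
  rw [Nat.cast_zero, zero_mul, cos_zero]
  split_ifs with hdvd
  · obtain ⟨t, ht⟩ := hdvd
    have hcos : ∀ x : ℕ, cos (x * (2 * π * m / (2 * N - 1))) = 1 := fun x => by
      rw [show (m : ℝ) = (2 * N - 1) * t by exact_mod_cast ht,
        show (x : ℝ) * (2 * π * ((2 * N - 1) * t) / (2 * N - 1)) =
            ((x * t : ℤ) : ℝ) * (2 * π) by
          push_cast; field_simp [two_mul_sub_one_ne_zero hN]]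
      exact cos_int_mul_two_pi _
    simp only [hcos, sum_const, card_range, nsmul_eq_mul, mul_one]
    ring
  · rw [sum_range_cos_eq_half_of_not_dvd hN hdvd]
    ring

theorem cos_mul_cos_grid (N a b x : ℕ) :
    cos (π * ((a : ℝ) + 1 / 2) * (2 * x / (2 * N - 1))) *
        cos (π * ((b : ℝ) + 1 / 2) * (2 * x / (2 * N - 1))) =
      (cos (2 * π * ((a - b : ℤ) : ℝ) * x / (2 * N - 1)) +
        cos (2 * π * ((a + b + 1 : ℤ) : ℝ) * x / (2 * N - 1))) / 2 := by
  rw [eq_div_iff two_ne_zero, mul_comm, ← mul_assoc, two_mul_cos_mul_cos]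
  push_cast
  ring_nf

theorem sum_fin_cc_mul_cos_mul_cos (hN : 1 ≤ N) {a b : ℕ} (ha : a ≤ N - 1)
    (hb : b ≤ N - 1) :
    ∑ x : Fin N, cc N x * (cos (π * ((a : ℝ) + 1 / 2) * (2 * (x : ℕ) / (2 * N - 1))) *
        cos (π * ((b : ℝ) + 1 / 2) * (2 * (x : ℕ) / (2 * N - 1)))) =
      if a = b then (2 * N - 1) / 4 / cc N (a + 1) else 0 := by
  have hdiff : (2 * N - 1 : ℤ) ∣ (a - b : ℤ) ↔ a = b := by
    refine ⟨fun h => ?_, fun h => by simp [h]⟩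
    have := Int.eq_zero_of_abs_lt_dvd h (abs_lt.2 ⟨by omega, by omega⟩)
    omega
  have hsum : (2 * N - 1 : ℤ) ∣ (a + b + 1 : ℤ) ↔ a = N - 1 ∧ b = N - 1 := by
    refine ⟨fun h => ?_, fun h => ⟨1, by omega⟩⟩
    have := Int.le_of_dvd (by omega) h
    omega
  have hcc : cc N (a + 1) = if a = N - 1 then 1 / 2 else 1 := by
    simp only [cc]
    congr 1
    simp only [Nat.add_one_ne_zero, false_or, eq_iff_iff]
    omega
  simp_rw [cos_mul_cos_grid, mul_div_assoc', mul_add, add_div, sum_add_distrib, ← sum_div]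
  rw [sum_fin_cc_mul_cos hN, sum_fin_cc_mul_cos hN, hcc]
  simp only [hdiff, hsum]
  split_ifs <;> first | omega | ring

end OneDimensional

section CosPlus

variable {n : ℕ}

theorem cosPlus_comp_perm (lam x : Fin n → ℝ) (σ : Perm (Fin n)) :
    cosPlus n lam (x ∘ σ) = cosPlus n lam x := by
  unfold cosPlus
  rw [← Equiv.sum_comp (Equiv.mulRight σ)]
  exact sum_congr rfl fun ρ _ => Equiv.prod_comp σ fun i => cos (π * lam (ρ i) * x i)

theorem cosPlus_mul_cosPlus (lam mu x : Fin n → ℝ) :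
    cosPlus n lam x * cosPlus n mu x =
      ∑ σ : Perm (Fin n), ∑ τ : Perm (Fin n),
        ∏ i, cos (π * lam (σ i) * x i) * cos (π * mu (τ i) * x i) := by
  simp only [cosPlus, sum_mul_sum, prod_mul_distrib]

theorem sum_prod_mul_cosPlus_mul_cosPlus {β : Type*} [Fintype β] (c g : β → ℝ)
    (lam mu : Fin n → ℝ) :
    ∑ r : Fin n → β, (∏ i, c (r i)) * (cosPlus n lam (g ∘ r) * cosPlus n mu (g ∘ r)) =
      ∑ σ : Perm (Fin n), ∑ τ : Perm (Fin n), ∏ i, ∑ x, c x *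
        (cos (π * lam (σ i) * g x) * cos (π * mu (τ i) * g x)) := by
  simp only [Fintype.prod_sum, cosPlus_mul_cosPlus, mul_sum, ← prod_mul_distrib,
    Function.comp_apply]
  rw [sum_comm]
  exact sum_congr rfl fun σ _ => sum_comm

end CosPlus

section Stabilizer

variable {n : ℕ} {α : Type*}

theorem card_filter_comp_eq_comp [DecidableEq α] (r : Fin n → α) (τ : Perm (Fin n)) :
    #{σ : Perm (Fin n) | r ∘ σ = r ∘ τ} = Hstab r :=
  card_equiv (Equiv.mulRight τ⁻¹) fun σ => by
    simp [Perm.coe_mul, Perm.coe_inv, ← Function.comp_assoc, comp_symm_eq]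

theorem hstab_comp_perm [DecidableEq α] (r : Fin n → α) (σ : Perm (Fin n)) :
    Hstab (r ∘ σ) = Hstab r :=
  (card_equiv (Equiv.mulLeft σ) fun τ => by simp [Perm.coe_mul, Function.comp_assoc]).trans
    (card_filter_comp_eq_comp r σ)

theorem hstab_pos [DecidableEq α] (r : Fin n → α) : 0 < Hstab r :=
  card_pos.2 ⟨1, by simp⟩

theorem exists_antitone_comp_perm [LinearOrder α] (r : Fin n → α) :
    ∃ σ : Perm (Fin n), Antitone (r ∘ σ) :=
  ⟨Fin.revPerm.trans (Tuple.sort r), (Tuple.monotone_sort r).comp_antitone Fin.rev_anti⟩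

theorem card_filter_antitone_comp_perm [LinearOrder α] (r : Fin n → α) :
    #{σ : Perm (Fin n) | Antitone (r ∘ σ)} = Hstab r := by
  obtain ⟨τ, hτ⟩ := exists_antitone_comp_perm r
  rw [← card_filter_comp_eq_comp r τ]
  congr 1
  exact filter_congr fun σ _ => ⟨fun hσ => Tuple.unique_antitone hσ hτ, fun h => h ▸ hτ⟩

end Stabilizer

theorem sum_eq_factorial_mul_sum_antitone {n : ℕ} {α 𝕜 : Type*} [LinearOrder α] [Fintype α]
    [Semifield 𝕜] [CharZero 𝕜]
    (G : (Fin n → α) → 𝕜)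
    (hG : ∀ (r : Fin n → α) (σ : Perm (Fin n)), G (r ∘ σ) = G r) :
    ∑ r, G r = n.factorial * ∑ s with Antitone s, G s / Hstab s := by
  classical
  calc ∑ r, G r
      = ∑ r, ∑ σ : Perm (Fin n), if Antitone (r ∘ σ) then G r / Hstab r else 0 := by
        refine sum_congr rfl fun r _ => ?_
        rw [← sum_filter, sum_const, card_filter_antitone_comp_perm, nsmul_eq_mul,
          mul_div_cancel₀ _ (Nat.cast_ne_zero.2 (hstab_pos r).ne')]
    _ = ∑ σ : Perm (Fin n), ∑ r : Fin n → α,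
          if Antitone (r ∘ σ) then G (r ∘ σ) / Hstab (r ∘ σ) else 0 := by
        rw [sum_comm]
        simp only [hG, hstab_comp_perm]
    _ = ∑ _σ : Perm (Fin n), ∑ s : Fin n → α, if Antitone s then G s / Hstab s else 0 :=
        sum_congr rfl fun σ _ => Equiv.sum_comp (σ.symm.arrowCongr (Equiv.refl α))
          (fun s => if Antitone s then G s / Hstab s else 0)
    _ = n.factorial * ∑ s with Antitone s, G s / Hstab s := by
        rw [sum_const, card_univ, Fintype.card_perm, Fintype.card_fin, nsmul_eq_mul, sum_filter]

theorem sum_sum_prod_ite_eq_of_antitone {n : ℕ} {α R : Type*} [LinearOrder α] [CommSemiring R]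
    {k k' : Fin n → α} (hk : Antitone k) (hk' : Antitone k') (w : α → R) :
    ∑ σ : Perm (Fin n), ∑ τ : Perm (Fin n),
        ∏ i, (if k (σ i) = k' (τ i) then w (k (σ i)) else 0) =
      if k = k' then n.factorial * Hstab k * ∏ i, w (k i) else 0 := by
  have hprod : ∀ σ τ : Perm (Fin n), ∏ i, (if k (σ i) = k' (τ i) then w (k (σ i)) else 0) =
      if k ∘ σ = k' ∘ τ then ∏ i, w (k i) else 0 := fun σ τ => by
    rw [Fintype.prod_ite_zero, Equiv.prod_comp σ (fun i => w (k i))]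
    congr 1
    simp only [funext_iff, Function.comp_apply]
  simp only [hprod]
  split_ifs with hkk'
  · subst hkk'
    rw [sum_comm]
    simp only [← sum_filter, sum_const, card_filter_comp_eq_comp, card_univ, Fintype.card_perm,
      Fintype.card_fin, nsmul_eq_mul]
    ring
  · refine sum_eq_zero fun σ _ => sum_eq_zero fun τ _ => if_neg fun h => hkk' ?_
    have hk'_eq : k' = k ∘ (σ * τ⁻¹ : Perm (Fin n)) := by
      rw [Perm.coe_mul, ← Function.comp_assoc, h]; ext; simp
    have hanti : Antitone (k ∘ (σ * τ⁻¹ : Perm (Fin n))) := hk'_eq ▸ hk'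
    rw [hk'_eq, Tuple.unique_antitone (τ := 1) hanti hk]
    rfl

theorem SMDCT_VII_orthogonality_general (n N : ℕ) (hN : 1 ≤ N)
    (k k' : Fin n → ℕ)
    (hk : ∀ i j : Fin n, i ≤ j → k j ≤ k i) (hkb : ∀ i, k i ≤ N - 1)
    (hk' : ∀ i j : Fin n, i ≤ j → k' j ≤ k' i) (hk'b : ∀ i, k' i ≤ N - 1) :
    ∑ r ∈ Finset.univ.filter
        (fun r : Fin n → Fin N => ∀ i j : Fin n, i ≤ j → (r j : ℕ) ≤ (r i : ℕ)),
      (∏ i : Fin n, cc N (r i)) * ((Hstab r : ℝ))⁻¹ *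
        cosPlus n (fun i => (k i : ℝ) + 1 / 2)
          (fun i => 2 * ((r i : ℕ) : ℝ) / (2 * N - 1)) *
        cosPlus n (fun i => (k' i : ℝ) + 1 / 2)
          (fun i => 2 * ((r i : ℕ) : ℝ) / (2 * N - 1))
      = (Hstab k : ℝ) / (∏ i : Fin n, cc N (k i + 1)) * ((2 * (N : ℝ) - 1) / 4) ^ n *
          (if k = k' then (1 : ℝ) else 0) := by
  classical
  let g : Fin N → ℝ := fun x => 2 * ((x : ℕ) : ℝ) / (2 * N - 1)
  let G : (Fin n → Fin N) → ℝ := fun r => (∏ i, cc N (r i)) *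
    (cosPlus n (fun i => (k i : ℝ) + 1 / 2) (g ∘ r) *
      cosPlus n (fun i => (k' i : ℝ) + 1 / 2) (g ∘ r))
  have hG : ∀ (r : Fin n → Fin N) (σ : Perm (Fin n)), G (r ∘ σ) = G r := fun r σ => by
    simp only [G, ← Function.comp_assoc, cosPlus_comp_perm]
    congr 1
    exact Equiv.prod_comp σ fun i => cc N (r i)
  have hcube : ∑ r, G r = ∑ σ : Perm (Fin n), ∑ τ : Perm (Fin n),
      ∏ i, if k (σ i) = k' (τ i) then (2 * N - 1) / 4 / cc N (k (σ i) + 1) else 0 := by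
    refine (sum_prod_mul_cosPlus_mul_cosPlus (fun x : Fin N => cc N x) g _ _).trans ?_
    refine sum_congr rfl fun σ _ => sum_congr rfl fun τ _ => prod_congr rfl fun i _ => ?_
    exact sum_fin_cc_mul_cos_mul_cos hN (hkb (σ i)) (hk'b (τ i))
  have hfilter :
      univ.filter (fun r : Fin n → Fin N => ∀ i j : Fin n, i ≤ j → (r j : ℕ) ≤ r i) =
        univ.filter Antitone :=
    filter_congr fun r _ => Iff.rfl
  calc _ = ∑ r with Antitone r, G r / Hstab r := by
        rw [hfilter]
        exact sum_congr rfl fun r _ => by simp only [G, g, Function.comp_def]; ring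
    _ = (n.factorial : ℝ)⁻¹ * ∑ r, G r := by
        rw [sum_eq_factorial_mul_sum_antitone G hG, inv_mul_cancel_left₀ (by positivity)]
    _ = _ := by
        rw [hcube, sum_sum_prod_ite_eq_of_antitone (fun i j => hk i j) (fun i j => hk' i j)
          fun a => (2 * N - 1) / 4 / cc N (a + 1)]
        split_ifs
        · rw [prod_div_distrib, prod_const, card_univ, Fintype.card_fin]
          field_simp
        · simp

theorem SMDCT_VII_orthogonality (n N : ℕ) (hn : 1 ≤ n) (hN : 1 ≤ N)
    (k k' : Fin n → ℕ)
    (hk : ∀ i j : Fin n, i ≤ j → k j ≤ k i) (hkb : ∀ i, k i ≤ N - 1)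
    (hk' : ∀ i j : Fin n, i ≤ j → k' j ≤ k' i) (hk'b : ∀ i, k' i ≤ N - 1) :
    ∑ r ∈ Finset.univ.filter
        (fun r : Fin n → Fin N => ∀ i j : Fin n, i ≤ j → (r j : ℕ) ≤ (r i : ℕ)),
      (∏ i : Fin n, cc N (r i)) * ((Hstab r : ℝ))⁻¹ *
        cosPlus n (fun i => (k i : ℝ) + 1 / 2)
          (fun i => 2 * ((r i : ℕ) : ℝ) / (2 * N - 1)) *
        cosPlus n (fun i => (k' i : ℝ) + 1 / 2)
          (fun i => 2 * ((r i : ℕ) : ℝ) / (2 * N - 1))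
      = (Hstab k : ℝ) / (∏ i : Fin n, cc N (k i + 1)) * ((2 * (N : ℝ) - 1) / 4) ^ n *
          (if k = k' then (1 : ℝ) else 0) :=
  SMDCT_VII_orthogonality_general n N hN k k' hk hkb hk' hk'b
end

section
/- (Jacobian of the polynomial variables) Let n ≥ 1 and for j ∈ {1,…,n} define X_j : ℝ^n → ℝ by X_j(x) = cos⁺_{(1,…,1,0,…,0)}(x), where the label has j entries equal to 1 followed by n−j entries equal to 0. Then for all x = (x_1,…,x_n) ∈ ℝ^n, the determinant of the n×n Jacobian matrix with (i,j) entry ∂X_j/∂x_i evaluated at x equals (−1)^{n(n+1)/2} · (1/2)^{n(n−1)/2} · π^n · (∏_{i=1}^n (n−i)! · i!) · 2^{n(n−1)} · ∏_{i=1}^n sin(π x_i) · ∏_{1 ≤ i < j ≤ n} sin(π(x_i + x_j)/2) · sin(π(x_i − x_j)/2). -/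
open Real Finset

/-- The polynomial variable `X_j = cos⁺_{(1,…,1,0,…,0)}` with `j+1` ones (for `j : Fin n`,
corresponding to the 1-indexed variable `X_{j+1}`). -/
noncomputable def Xvar (n : ℕ) (j : Fin n) (x : Fin n → ℝ) : ℝ :=
  cosPlus n (fun i => if i ≤ j then (1 : ℝ) else 0) x

/-!
Write `c i = cos (π x i)`. For a label with `j + 1` ones, each term of `cos⁺` is the product of
the `c i` over a `(j + 1)`-subset, and every subset arises from `(j + 1)! (n - j - 1)!`
permutations, so `X_j = (n - j - 1)! (j + 1)! e_{j+1}(c)`. As `e_{j+1}(c)` is affine in each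
`c i`, the `(i, j)` entry of the Jacobian is `-π sin (π x i) (n - j - 1)! (j + 1)!` times
`e_j` of the `c k` with `k ≠ i`. Comparing coefficients in `∏_{k ≠ i} (1 + c k t) =
(1 + c i t)⁻¹ ∏_k (1 + c k t)` factors the matrix of these `e_j` as the Vandermonde matrix of
`-c` times a unitriangular matrix, so its determinant is `∏_{i < j} (c i - c j)`; finally
`cos a - cos b = -2 sin ((a + b) / 2) sin ((a - b) / 2)`.
-/

open scoped Nat

namespace Multiset

variable {R : Type*}

theorem esymm_cons_succ [CommSemiring R] (a : R) (s : Multiset R) (k : ℕ) :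
    (a ::ₘ s).esymm (k + 1) = s.esymm (k + 1) + a * s.esymm k := by
  simp [esymm, powersetCard_cons, map_map, sum_map_mul_left]

theorem esymm_eq_sum_neg_pow_mul_esymm_cons [CommRing R] (a : R) (s : Multiset R) (m : ℕ) :
    s.esymm m = ∑ k ∈ Finset.range (m + 1), (-a) ^ k * (a ::ₘ s).esymm (m - k) := by
  induction m with
  | zero => simp [esymm]
  | succ m ih =>
    rw [eq_sub_of_add_eq (esymm_cons_succ a s m).symm, ih, Finset.sum_range_succ' _ (m + 1),
      Finset.mul_sum, sub_eq_add_neg, ← Finset.sum_neg_distrib, add_comm]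
    simp only [Nat.sub_zero, pow_zero, one_mul, Nat.add_sub_add_right]
    congr 1
    exact Finset.sum_congr rfl fun k _ => by ring

end Multiset

theorem Finset.map_val_univ_eq_cons_erase {α β : Type*} [Fintype α] [DecidableEq α]
    (f : α → β) (i : α) :
    univ.val.map f = f i ::ₘ (univ.erase i).val.map f := by
  rw [← Multiset.map_cons, Finset.erase_val, Multiset.cons_erase (mem_univ_val i)]

theorem Matrix.det_of_esymm_erase {R : Type*} [CommRing R] {n : ℕ} (c : Fin n → R) :
    (Matrix.of fun i j : Fin n => ((univ.erase i).val.map c).esymm j).det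
      = ∏ i, ∏ j ∈ Ioi i, (c i - c j) := by
  let T : Matrix (Fin n) (Fin n) R :=
    Matrix.of fun k j => if k ≤ j then (univ.val.map c).esymm (j - k) else 0
  have hfactor : (Matrix.of fun i j : Fin n => ((univ.erase i).val.map c).esymm j)
      = Matrix.vandermonde (-c) * T := by
    ext i j
    have hrange : (range n).filter (· ≤ (j : ℕ)) = range (j + 1) := by
      ext k; simp only [mem_filter, mem_range]; omega
    simp only [Matrix.of_apply, Matrix.mul_apply, Matrix.vandermonde_apply, T, mul_ite, mul_zero,
      Pi.neg_apply, Fin.le_def]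
    rw [Fin.sum_univ_eq_sum_range
        (fun k => if k ≤ (j : ℕ) then (-c i) ^ k * (univ.val.map c).esymm (j - k) else 0),
      ← sum_filter, hrange,
      map_val_univ_eq_cons_erase c i, ← Multiset.esymm_eq_sum_neg_pow_mul_esymm_cons]
  have hT : T.det = 1 := by
    have htri : T.IsUpperTriangular := fun k j (hjk : j < k) => by simp [T, not_le.2 hjk]
    rw [Matrix.det_of_isUpperTriangular htri]
    simp [T, Multiset.esymm]
  rw [hfactor, Matrix.det_mul, hT, mul_one, Matrix.det_vandermonde]
  simp only [Pi.neg_apply, neg_sub_neg]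

namespace Equiv.Perm
variable {α : Type*} [Fintype α] [DecidableEq α]

def preimageEqEquiv (A t : Finset α) :
    {σ : Perm α // ∀ i, σ i ∈ A ↔ i ∈ t} ≃
      ({i // i ∈ t} ≃ {i // i ∈ A}) × ({i // i ∉ t} ≃ {i // i ∉ A}) where
  toFun σ := (σ.1.subtypeEquiv fun i => (σ.2 i).symm,
    σ.1.subtypeEquiv fun i => not_congr (σ.2 i).symm)
  invFun ef := ⟨Equiv.subtypeCongr ef.1 ef.2, fun i => by
    by_cases h : i ∈ t
    · simp [Equiv.subtypeCongr, sumCompl_symm_apply_of_pos h, h]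
    · simpa [Equiv.subtypeCongr, sumCompl_symm_apply_of_neg h, h] using (ef.2 ⟨i, h⟩).2⟩
  left_inv σ := by
    ext i
    by_cases h : i ∈ t
    · simp [Equiv.subtypeCongr, sumCompl_symm_apply_of_pos h]
    · simp [Equiv.subtypeCongr, sumCompl_symm_apply_of_neg h]
  right_inv ef := by
    ext i
    · simp [Equiv.subtypeCongr, sumCompl_symm_apply_of_pos i.2]
    · simp [Equiv.subtypeCongr, sumCompl_symm_apply_of_neg i.2]

theorem card_preimage_eq {A t : Finset α} (h : #t = #A) :
    Fintype.card {σ : Perm α // ∀ i, σ i ∈ A ↔ i ∈ t}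
      = (#A)! * (Fintype.card α - #A)! := by
  have hin : Fintype.card {i // i ∈ t} = Fintype.card {i // i ∈ A} := by
    simp only [Fintype.card_coe, h]
  have hout : Fintype.card {i // i ∉ t} = Fintype.card {i // i ∉ A} := by
    simp only [Fintype.card_subtype_compl, Fintype.card_coe, h]
  rw [Fintype.card_congr (preimageEqEquiv A t), Fintype.card_prod,
    Fintype.card_equiv (Fintype.equivOfCardEq hin),
    Fintype.card_equiv (Fintype.equivOfCardEq hout)]
  simp only [Fintype.card_subtype_compl, Fintype.card_coe, h]

theorem sum_prod_filter_mem {R : Type*} [CommSemiring R] (A : Finset α) (c : α → R) :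
    ∑ σ : Perm α, ∏ i ∈ univ.filter (fun i => σ i ∈ A), c i
      = ((#A)! * (Fintype.card α - #A)! : ℕ) * (univ.val.map c).esymm #A := by
  have hmaps : ∀ σ ∈ (univ : Finset (Perm α)),
      univ.filter (fun i => σ i ∈ A) ∈ powersetCard #A univ := fun σ _ => by
    rw [mem_powersetCard_univ, ← card_map σ.toEmbedding]
    congr 1
    ext i
    simp
  rw [← sum_fiberwise_of_maps_to hmaps, Finset.esymm_map_val, mul_sum]
  refine sum_congr rfl fun t ht => ?_
  rw [sum_congr rfl fun σ hσ => by rw [(mem_filter.1 hσ).2], sum_const, nsmul_eq_mul,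
    ← card_preimage_eq (mem_powersetCard_univ.1 ht), Fintype.card_subtype]
  congr 3
  ext σ
  simp [Finset.ext_iff]

end Equiv.Perm

theorem cosPlus_ite_mem {n : ℕ} (A : Finset (Fin n)) (x : Fin n → ℝ) :
    cosPlus n (fun i => if i ∈ A then 1 else 0) x
      = ((#A)! * (n - #A)! : ℕ) * (univ.val.map fun i => cos (π * x i)).esymm #A := by
  have hterm : ∀ σ : Equiv.Perm (Fin n),
      ∏ i, cos (π * (if σ i ∈ A then 1 else 0) * x i)
        = ∏ i ∈ univ.filter (fun i => σ i ∈ A), cos (π * x i) := fun σ => by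
    rw [prod_filter]
    refine prod_congr rfl fun i _ => ?_
    by_cases h : σ i ∈ A <;> simp [h]
  rw [cosPlus, sum_congr rfl fun σ _ => hterm σ, Equiv.Perm.sum_prod_filter_mem,
    Fintype.card_fin]

theorem Xvar_eq_mul_esymm {n : ℕ} (j : Fin n) (x : Fin n → ℝ) :
    Xvar n j x = ((n - (j + 1))! * (j + 1)! : ℕ) *
      (univ.val.map fun i => cos (π * x i)).esymm (j + 1) := by
  simpa only [Xvar, mem_Iic, Fin.card_Iic, Nat.mul_comm] using cosPlus_ite_mem (Iic j) x

theorem differentiable_Xvar (n : ℕ) (j : Fin n) : Differentiable ℝ (Xvar n j) := by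
  unfold Xvar cosPlus
  fun_prop

theorem fderiv_Xvar_single {n : ℕ} (j : Fin n) (x : Fin n → ℝ) (i : Fin n) :
    fderiv ℝ (Xvar n j) x (Pi.single i 1)
      = ((n - (j + 1))! * (j + 1)! : ℕ) *
          (-(π * sin (π * x i)) * ((univ.erase i).val.map fun k => cos (π * x k)).esymm j) := by
  set K : ℝ := (((n - (j + 1))! * (j + 1)! : ℕ) : ℝ)
  set s := (univ.erase i).val.map fun k => cos (π * x k)
  have hline : (fun t : ℝ => Xvar n j (x + t • Pi.single i 1))
      = fun t => K * (s.esymm (j + 1) + cos (π * (x i + t)) * s.esymm j) := by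
    funext t
    have hs : (univ.erase i).val.map (fun k => cos (π * (x + t • Pi.single i 1 : Fin n → ℝ) k))
        = s :=
      Multiset.map_congr rfl fun k hk => by simp [(mem_erase.1 (mem_def.2 hk)).1]
    rw [Xvar_eq_mul_esymm, map_val_univ_eq_cons_erase _ i, Multiset.esymm_cons_succ, hs]
    simp [K]
  have hderiv : HasDerivAt (fun t => K * (s.esymm (j + 1) + cos (π * (x i + t)) * s.esymm j))
      (K * (-(π * sin (π * x i)) * s.esymm j)) 0 := by
    have hcos : HasDerivAt (fun t : ℝ => cos (π * (x i + t))) (-(π * sin (π * x i))) 0 := by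
      simpa [mul_comm] using (((hasDerivAt_id' (0 : ℝ)).const_add (x i)).const_mul π).cos
    exact ((hcos.mul_const _).const_add _).const_mul K
  rw [← (differentiable_Xvar n j x).lineDeriv_eq_fderiv, lineDeriv, hline, hderiv.deriv]

theorem Fin.prod_prod_Ioi_mul_left {M : Type*} [CommMonoid M] {n : ℕ} (a : M)
    (f : Fin n → Fin n → M) :
    ∏ i, ∏ j ∈ Ioi i, a * f i j = a ^ (n * (n - 1) / 2) * ∏ i, ∏ j ∈ Ioi i, f i j := by
  have hcard : ∑ i : Fin n, #(Ioi i) = n * (n - 1) / 2 := by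
    simp only [Fin.card_Ioi]
    rw [Fin.sum_univ_eq_sum_range (fun i => n - 1 - i), sum_range_reflect (fun i => i) n,
      sum_range_id]
  simp only [prod_mul_distrib, Finset.prod_const, prod_pow_eq_pow_sum, hcard]

theorem neg_one_pow_mul_half_pow_mul_two_pow (n : ℕ) :
    (-1 : ℝ) ^ (n * (n + 1) / 2) * (1 / 2 : ℝ) ^ (n * (n - 1) / 2) * 2 ^ (n * (n - 1))
      = (-1) ^ n * (-2) ^ (n * (n - 1) / 2) := by
  obtain ⟨N, hN⟩ := Nat.even_mul_pred_self n
  have hsucc : n * (n + 1) = n * (n - 1) + 2 * n := by cases n <;> simp; ring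
  rw [show n * (n + 1) / 2 = N + n by omega, show n * (n - 1) / 2 = N by omega, hN, pow_add,
    pow_add, neg_pow 2 N]
  have hhalf : (1 / 2 : ℝ) ^ N * 2 ^ N = 1 := by rw [← mul_pow]; norm_num
  linear_combination ((-1) ^ N * (-1) ^ n * 2 ^ N : ℝ) * hhalf

theorem cos_sub_cos_mul_pi (a b : ℝ) :
    cos (π * a) - cos (π * b) = -2 * (sin (π * (a + b) / 2) * sin (π * (a - b) / 2)) := by
  rw [cos_sub_cos]
  ring_nf

theorem jacobian_of_Xvars_general (n : ℕ) (x : Fin n → ℝ) :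
    (Matrix.of fun i j : Fin n => fderiv ℝ (Xvar n j) x (Pi.single i 1)).det
      = (-1 : ℝ) ^ (n * (n + 1) / 2) * (1 / 2 : ℝ) ^ (n * (n - 1) / 2) *
          Real.pi ^ n *
          (∏ i : Fin n,
            ((Nat.factorial (n - ((i : ℕ) + 1)) * Nat.factorial ((i : ℕ) + 1) : ℕ) : ℝ)) *
          ((2 : ℝ) ^ (n * (n - 1)) *
            (∏ i : Fin n, Real.sin (Real.pi * x i)) *
            ∏ i : Fin n, ∏ j ∈ Finset.Ioi i,
              Real.sin (Real.pi * (x i + x j) / 2) *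
                Real.sin (Real.pi * (x i - x j) / 2)) := by
  have hJ : (Matrix.of fun i j : Fin n => fderiv ℝ (Xvar n j) x (Pi.single i 1))
      = Matrix.diagonal (fun i => -(π * sin (π * x i)))
        * Matrix.of (fun i j : Fin n => ((univ.erase i).val.map fun k => cos (π * x k)).esymm j)
        * Matrix.diagonal (fun j : Fin n => (((n - (j + 1))! * (j + 1)! : ℕ) : ℝ)) := by
    ext i j
    rw [Matrix.mul_diagonal, Matrix.diagonal_mul, Matrix.of_apply, Matrix.of_apply,
      fderiv_Xvar_single]
    ring
  rw [hJ, Matrix.det_mul, Matrix.det_mul, Matrix.det_diagonal, Matrix.det_diagonal,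
    Matrix.det_of_esymm_erase]
  simp_rw [cos_sub_cos_mul_pi]
  rw [Fin.prod_prod_Ioi_mul_left, prod_neg, prod_mul_distrib, prod_const, card_univ,
    Fintype.card_fin]
  set P := ∏ i : Fin n, (((n - (i + 1))! * (i + 1)! : ℕ) : ℝ)
  set S := ∏ i, sin (π * x i)
  set Q := ∏ i, ∏ j ∈ Ioi i, sin (π * (x i + x j) / 2) * sin (π * (x i - x j) / 2)
  linear_combination -(π ^ n * P * S * Q) * neg_one_pow_mul_half_pow_mul_two_pow n

theorem jacobian_of_Xvars (n : ℕ) (hn : 1 ≤ n) (x : Fin n → ℝ) :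
    (Matrix.of fun i j : Fin n => fderiv ℝ (Xvar n j) x (Pi.single i 1)).det
      = (-1 : ℝ) ^ (n * (n + 1) / 2) * (1 / 2 : ℝ) ^ (n * (n - 1) / 2) *
          Real.pi ^ n *
          (∏ i : Fin n,
            ((Nat.factorial (n - ((i : ℕ) + 1)) * Nat.factorial ((i : ℕ) + 1) : ℕ) : ℝ)) *
          ((2 : ℝ) ^ (n * (n - 1)) *
            (∏ i : Fin n, Real.sin (Real.pi * x i)) *
            ∏ i : Fin n, ∏ j ∈ Finset.Ioi i,
              Real.sin (Real.pi * (x i + x j) / 2) *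
                Real.sin (Real.pi * (x i - x j) / 2)) :=
  jacobian_of_Xvars_general n x
end

section
/- (Injectivity of the change of variables) Let n ≥ 1 and for j ∈ {1,…,n} define X_j : ℝ^n → ℝ by X_j(x) = cos⁺_{(1,…,1,0,…,0)}(x), where the label has j entries equal to 1 followed by n−j entries equal to 0. Then the map φ : F(S̃_n^aff) → ℝ^n given by φ(x) = (X_1(x), …, X_n(x)) is injective on the fundamental domain F(S̃_n^aff) = {x ∈ ℝ^n : 1 ≥ x_1 ≥ x_2 ≥ … ≥ x_n ≥ 0}. -/
/-!
Write `c_i = cos (π x_i)`. Summing over all permutations turns the product of the `c_i` over the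
first `j` indices into a sum over all `j`-element index sets, each counted `j! (n - j)!` times
(the permutation group acts transitively on `j`-sets). Hence `X_j(x) = j! (n - j)! e_j(c)`, so
`φ(x)` determines the elementary symmetric functions of the `c_i`, hence the polynomial
`∏ (T - c_i)` and the multiset of its roots. On the fundamental domain the tuple `c` is
monotone, so it is determined by its multiset of values, and `cos (π ·)` is injective on `[0, 1]`.
-/

open Real Finset

/-- The fundamental domain `F(S̃_n^aff) = {x ∈ ℝ^n : 1 ≥ x_1 ≥ x_2 ≥ … ≥ x_n ≥ 0}`. -/
def Fdom (n : ℕ) : Set (Fin n → ℝ) :=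
  {x | (∀ i j : Fin n, i ≤ j → x j ≤ x i) ∧ ∀ i : Fin n, 0 ≤ x i ∧ x i ≤ 1}

open scoped Nat

theorem MulAction.card_nsmul_sum_smul_eq {G X M : Type*} [Group G] [Fintype G] [MulAction G X]
    [Fintype X] [IsPretransitive G X] [AddCommMonoid M] (f : X → M) (x : X) :
    Fintype.card X • ∑ g : G, f (g • x) = Fintype.card G • ∑ y, f y := by
  have orbit_sum_const : ∀ y : X, ∑ g : G, f (g • y) = ∑ g : G, f (g • x) := by
    intro y
    obtain ⟨h, rfl⟩ := exists_smul_eq G x y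
    simp_rw [smul_smul]
    exact Fintype.sum_equiv (Equiv.mulRight h) _ _ fun _ => rfl
  calc Fintype.card X • ∑ g : G, f (g • x)
      = ∑ y : X, ∑ g : G, f (g • y) := by simp [orbit_sum_const]
    _ = ∑ g : G, ∑ y, f (g • y) := Finset.sum_comm
    _ = Fintype.card G • ∑ y, f y := by
      simp [(MulAction.bijective _).sum_comp (fun y => f y)]

theorem Finset.choose_nsmul_sum_perm_prod_eq_factorial_nsmul_esymm {α R : Type*} [Fintype α]
    [DecidableEq α] [CommSemiring R] (f : α → R) (s : Finset α) :
    (Fintype.card α).choose #s • ∑ σ : Equiv.Perm α, ∏ k ∈ s, f (σ k)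
      = (Fintype.card α)! • (univ.val.map f).esymm #s := by
  have := Set.powersetCard.isPretransitive (α := α) (n := #s)
  have h := MulAction.card_nsmul_sum_smul_eq (G := Equiv.Perm α)
    (fun t : Set.powersetCard α #s => ∏ i ∈ (t : Finset α), f i) ⟨s, rfl⟩
  have hcard : Fintype.card (Set.powersetCard α #s) = (Fintype.card α).choose #s := by
    rw [Fintype.card_eq_nat_card, Set.powersetCard.card, Nat.card_eq_fintype_card]
  have hsmul : ∀ σ : Equiv.Perm α,
      ∏ i ∈ ((σ • (⟨s, rfl⟩ : Set.powersetCard α #s) : Set.powersetCard α #s) : Finset α), f i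
        = ∏ k ∈ s, f (σ k) := by
    intro σ
    rw [Set.powersetCard.coe_smul, Finset.smul_finset_def, Finset.prod_image (by simp)]
    rfl
  have hesymm : ∑ t : Set.powersetCard α #s, ∏ i ∈ (t : Finset α), f i
      = (univ.val.map f).esymm #s := by
    rw [Finset.esymm_map_val,
      Finset.sum_subtype (p := (· ∈ Set.powersetCard α #s)) _ (by simp [Set.powersetCard.mem_iff])]
  rwa [hcard, Fintype.card_perm, hesymm, Fintype.sum_congr _ _ hsmul] at h

theorem Xvar_eq_sum_perm_prod (n : ℕ) (j : Fin n) (x : Fin n → ℝ) :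
    Xvar n j x = ∑ σ : Equiv.Perm (Fin n), ∏ k ∈ Iic j, cos (π * x (σ k)) := by
  unfold Xvar cosPlus
  refine Fintype.sum_equiv (Equiv.inv _) _ _ fun σ => ?_
  have hIic : Iic j = univ.filter (· ≤ j) := by ext; simp
  rw [← Equiv.prod_comp σ⁻¹, hIic, prod_filter]
  refine prod_congr rfl fun k _ => ?_
  split_ifs with hk <;> simp [hk]

theorem Xvar_eq_factorial_mul_esymm (n : ℕ) (j : Fin n) (x : Fin n → ℝ) :
    Xvar n j x = ((j + 1)! * (n - (j + 1))! : ℝ)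
      * (univ.val.map fun i => cos (π * x i)).esymm (j + 1) := by
  have h := choose_nsmul_sum_perm_prod_eq_factorial_nsmul_esymm (fun i => cos (π * x i)) (Iic j)
  have hfact : (n ! : ℝ) = n.choose (j + 1) * ((j + 1)! * (n - (j + 1))!) := by
    rw [← mul_assoc]; exact_mod_cast (Nat.choose_mul_factorial_mul_factorial j.isLt).symm
  have hchoose : (n.choose (j + 1) : ℝ) ≠ 0 := by exact_mod_cast (Nat.choose_pos j.isLt).ne'
  rw [Fin.card_Iic, Fintype.card_fin, nsmul_eq_mul, nsmul_eq_mul, ← Xvar_eq_sum_perm_prod,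
    hfact, mul_assoc] at h
  exact mul_left_cancel₀ hchoose h

open Polynomial in
theorem Multiset.eq_of_esymm_eq {R : Type*} [CommRing R] [IsDomain R] {s t : Multiset R}
    (hcard : card s = card t) (h : ∀ k, 0 < k → k ≤ card s → s.esymm k = t.esymm k) :
    s = t := by
  have hprod : (s.map fun a => X - C a).prod = (t.map fun a => X - C a).prod := by
    rw [prod_X_sub_X_eq_sum_esymm, prod_X_sub_X_eq_sum_esymm, ← hcard]
    refine Finset.sum_congr rfl fun k hk => ?_
    rcases k.eq_zero_or_pos with rfl | hk0
    · simp [Multiset.esymm]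
    · rw [h k hk0 (Nat.lt_succ_iff.mp (Finset.mem_range.mp hk))]
  simpa using congrArg roots hprod

theorem Fin.eq_of_monotone_of_map_univ_eq {α : Type*} [PartialOrder α] {n : ℕ} {f g : Fin n → α}
    (hf : Monotone f) (hg : Monotone g) (h : univ.val.map f = univ.val.map g) : f = g := by
  rw [Fin.univ_val_map, Fin.univ_val_map, Multiset.coe_eq_coe] at h
  exact List.ofFn_injective (h.eq_of_pairwise' hf.sortedLE_ofFn.pairwise hg.sortedLE_ofFn.pairwise)

theorem Real.strictAntiOn_cos_pi_mul : StrictAntiOn (fun t => cos (π * t)) (Set.Icc 0 1) := by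
  refine strictAntiOn_cos.comp_strictMonoOn (fun t _ s _ hts => by gcongr) fun t ht => ?_
  exact ⟨mul_nonneg pi_pos.le ht.1, mul_le_of_le_one_right pi_pos.le ht.2⟩

theorem monotone_cos_pi_mul_of_mem_Fdom {n : ℕ} {x : Fin n → ℝ} (hx : x ∈ Fdom n) :
    Monotone fun i => cos (π * x i) :=
  fun i k hik => strictAntiOn_cos_pi_mul.antitoneOn (hx.2 k) (hx.2 i) (hx.1 i k hik)

theorem injective_change_of_variables_general (n : ℕ) :
    Set.InjOn (fun x : Fin n → ℝ => fun j : Fin n => Xvar n j x) (Fdom n) := by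
  intro x hx y hy hxy
  have hesymm : ∀ k, 0 < k → k ≤ Multiset.card (univ.val.map fun i => cos (π * x i)) →
      (univ.val.map fun i => cos (π * x i)).esymm k
        = (univ.val.map fun i => cos (π * y i)).esymm k := by
    intro k hk hkn
    simp only [Multiset.card_map, card_val, Finset.card_fin] at hkn
    have hXk := congrFun hxy ⟨k - 1, by omega⟩
    simp only [Xvar_eq_factorial_mul_esymm, Nat.sub_add_cancel hk] at hXk
    exact mul_left_cancel₀ (by positivity) hXk
  have hcos := Fin.eq_of_monotone_of_map_univ_eq (monotone_cos_pi_mul_of_mem_Fdom hx)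
    (monotone_cos_pi_mul_of_mem_Fdom hy) (Multiset.eq_of_esymm_eq (by simp) hesymm)
  funext i
  exact strictAntiOn_cos_pi_mul.injOn (hx.2 i) (hy.2 i) (congrFun hcos i)

theorem injective_change_of_variables (n : ℕ) (hn : 1 ≤ n) :
    Set.InjOn (fun x : Fin n → ℝ => fun j : Fin n => Xvar n j x) (Fdom n) :=
  injective_change_of_variables_general n
end

section
/- (Product decomposition, antisymmetric–antisymmetric) Let n ≥ 1 and let λ = (λ_1,…,λ_n), μ = (μ_1,…,μ_n) ∈ ℝ^n. Then for all x ∈ ℝ^n, cos⁻_λ(x) · cos⁻_μ(x) = 2^{−n} · Σ_{σ ∈ S_n} sgn(σ) Σ_{a ∈ {−1,+1}^n} cos⁺_{(λ_1 + a_1 μ_{σ(1)}, …, λ_n + a_n μ_{σ(n)})}(x). -/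
/-!
Expanding both antisymmetric sums, the product is a signed sum over pairs of permutations `(τ, ρ)`
of `∏ᵢ cos(π λ_{τ i} xᵢ) cos(π μ_{ρ i} xᵢ)`, and `cos u cos v = ½ Σ_{a = ±1} cos(u + a v)` turns
each such product into `2⁻ⁿ Σ_{a ∈ {±1}ⁿ} ∏ᵢ cos(π (λ_{τ i} + aᵢ μ_{ρ i}) xᵢ)`. On the right-hand
side, the summand indexed by `σ` and by the permutation `τ` inside `cos⁺` is the same expression
for the pair `(τ, σ τ)`, after reindexing the signs by `τ`; since `sgn σ = sgn τ · sgn (σ τ)`,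
the two sides agree.
-/

open Real Finset

/-- The antisymmetric multivariate cosine function
`cos⁻_λ(x) = Σ_{σ ∈ S_n} sgn(σ) ∏_{i=1}^n cos(π λ_{σ(i)} x_i)`. -/
noncomputable def cosMinus (n : ℕ) (lam x : Fin n → ℝ) : ℝ :=
  ∑ σ : Equiv.Perm (Fin n),
    ((Equiv.Perm.sign σ : ℤ) : ℝ) * ∏ i : Fin n, Real.cos (Real.pi * lam (σ i) * x i)

lemma cos_mul_cos_eq_half_sum_units (u v : ℝ) :
    cos u * cos v = 2⁻¹ * ∑ a : ℤˣ, cos (u + ((a : ℤ) : ℝ) * v) := by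
  rw [show (univ : Finset ℤˣ) = {1, -1} from rfl, sum_pair (by decide)]
  push_cast
  rw [neg_one_mul, ← sub_eq_add_neg, one_mul, cos_add, cos_sub]
  ring

lemma prod_cos_mul_cos {ι : Type*} [Fintype ι] [DecidableEq ι] (f g : ι → ℝ) :
    ∏ i, cos (f i) * cos (g i)
      = (2 ^ Fintype.card ι)⁻¹ * ∑ a : ι → ℤˣ, ∏ i, cos (f i + ((a i : ℤ) : ℝ) * g i) := by
  simp_rw [cos_mul_cos_eq_half_sum_units]
  rw [prod_mul_distrib, prod_const, prod_univ_sum, Fintype.piFinset_univ, card_univ, inv_pow]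

noncomputable def signCosSum (n : ℕ) (α β x : Fin n → ℝ) : ℝ :=
  ∑ a : Fin n → ℤˣ, ∏ i, cos (π * (α i + ((a i : ℤ) : ℝ) * β i) * x i)

lemma prod_cos_mul_cos_eq_signCosSum (n : ℕ) (α β x : Fin n → ℝ) :
    ∏ i, cos (π * α i * x i) * cos (π * β i * x i) = (2 ^ n)⁻¹ * signCosSum n α β x := by
  rw [prod_cos_mul_cos, Fintype.card_fin, signCosSum]
  congr! 4
  ring

lemma signCosSum_comp_perm_signs (n : ℕ) (α β x : Fin n → ℝ) (τ : Equiv.Perm (Fin n)) :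
    ∑ a : Fin n → ℤˣ, ∏ i, cos (π * (α i + ((a (τ i) : ℤ) : ℝ) * β i) * x i)
      = signCosSum n α β x :=
  Equiv.sum_comp (Equiv.arrowCongr τ.symm (Equiv.refl ℤˣ))
    (fun a => ∏ i, cos (π * (α i + ((a i : ℤ) : ℝ) * β i) * x i))

lemma cosMinus_mul_cosMinus (n : ℕ) (lam mu x : Fin n → ℝ) :
    cosMinus n lam x * cosMinus n mu x
      = (2 ^ n)⁻¹ * ∑ τ : Equiv.Perm (Fin n), ∑ ρ : Equiv.Perm (Fin n),
          ((Equiv.Perm.sign τ : ℤ) : ℝ) * ((Equiv.Perm.sign ρ : ℤ) : ℝ) *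
            signCosSum n (lam ∘ τ) (mu ∘ ρ) x := by
  rw [cosMinus, cosMinus, Fintype.sum_mul_sum, mul_sum]
  refine sum_congr rfl fun τ _ => ?_
  rw [mul_sum]
  refine sum_congr rfl fun ρ _ => ?_
  rw [mul_mul_mul_comm, ← prod_mul_distrib]
  have h := prod_cos_mul_cos_eq_signCosSum n (lam ∘ τ) (mu ∘ ρ) x
  simp only [Function.comp_apply] at h
  rw [h]
  ring

lemma sum_sign_mul_sum_cosPlus (n : ℕ) (lam mu x : Fin n → ℝ) :
    ∑ σ : Equiv.Perm (Fin n), ((Equiv.Perm.sign σ : ℤ) : ℝ) *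
        ∑ a : Fin n → ℤˣ, cosPlus n (fun i => lam i + ((a i : ℤ) : ℝ) * mu (σ i)) x
      = ∑ τ : Equiv.Perm (Fin n), ∑ ρ : Equiv.Perm (Fin n),
          ((Equiv.Perm.sign τ : ℤ) : ℝ) * ((Equiv.Perm.sign ρ : ℤ) : ℝ) *
            signCosSum n (lam ∘ τ) (mu ∘ ρ) x := by
  have reindex_signs (σ τ : Equiv.Perm (Fin n)) :
      ∑ a : Fin n → ℤˣ, ∏ i, cos (π * (lam (τ i) + ((a (τ i) : ℤ) : ℝ) * mu (σ (τ i))) * x i)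
        = signCosSum n (lam ∘ τ) (mu ∘ ⇑(σ * τ)) x :=
    signCosSum_comp_perm_signs n (lam ∘ τ) (mu ∘ ⇑(σ * τ)) x τ
  have sign_eq (σ τ : Equiv.Perm (Fin n)) :
      ((Equiv.Perm.sign σ : ℤ) : ℝ)
        = ((Equiv.Perm.sign τ : ℤ) : ℝ) * ((Equiv.Perm.sign (σ * τ) : ℤ) : ℝ) := by
    rw [Equiv.Perm.sign_mul, ← Int.cast_mul, ← Units.val_mul, mul_left_comm, Int.units_mul_self,
      mul_one]
  simp only [cosPlus]
  simp_rw [sum_comm (γ := Fin n → ℤˣ), reindex_signs, mul_sum]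
  rw [sum_comm]
  refine sum_congr rfl fun τ _ => ?_
  calc ∑ σ : Equiv.Perm (Fin n), ((Equiv.Perm.sign σ : ℤ) : ℝ) *
          signCosSum n (lam ∘ τ) (mu ∘ ⇑(σ * τ)) x
      = ∑ σ : Equiv.Perm (Fin n), ((Equiv.Perm.sign τ : ℤ) : ℝ) *
          ((Equiv.Perm.sign (σ * τ) : ℤ) : ℝ) * signCosSum n (lam ∘ τ) (mu ∘ ⇑(σ * τ)) x := by
        simp_rw [← sign_eq]
    _ = _ := Equiv.sum_comp (Equiv.mulRight τ) fun ρ =>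
        ((Equiv.Perm.sign τ : ℤ) : ℝ) * ((Equiv.Perm.sign ρ : ℤ) : ℝ) *
          signCosSum n (lam ∘ τ) (mu ∘ ρ) x

theorem product_decomposition_antisym_antisym_general (n : ℕ)
    (lam mu : Fin n → ℝ) (x : Fin n → ℝ) :
    cosMinus n lam x * cosMinus n mu x
      = ((2 : ℝ) ^ n)⁻¹ *
          ∑ σ : Equiv.Perm (Fin n),
            ((Equiv.Perm.sign σ : ℤ) : ℝ) *
              ∑ a : Fin n → ℤˣ,
                cosPlus n (fun i => lam i + ((a i : ℤ) : ℝ) * mu (σ i)) x := by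
  rw [cosMinus_mul_cosMinus, sum_sign_mul_sum_cosPlus]

theorem product_decomposition_antisym_antisym (n : ℕ) (hn : 1 ≤ n)
    (lam mu : Fin n → ℝ) (x : Fin n → ℝ) :
    cosMinus n lam x * cosMinus n mu x
      = ((2 : ℝ) ^ n)⁻¹ *
          ∑ σ : Equiv.Perm (Fin n),
            ((Equiv.Perm.sign σ : ℤ) : ℝ) *
              ∑ a : Fin n → ℤˣ,
                cosPlus n (fun i => lam i + ((a i : ℤ) : ℝ) * mu (σ i)) x :=
  product_decomposition_antisym_antisym_general n lam mu x
end
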